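/- Diffuseness is a local property: let X, Y be locally connected spaces, f : X → Y a function, and 𝒱 an open cover of X. If for each V ∈ 𝒱 the restriction of f to V is a diffuse continuous function V → Y, then f is a diffuse continuous function. -/

import Mathlib

open Set Topology

/-- An open subset `U` is Z-dense if it meets every non-empty open connected set
in a non-empty connected set. -/
def IsZDense {X : Type*} [TopologicalSpace X] (U : Set X) : Prop :=
  IsOpen U ∧ ∀ C : Set X, IsOpen C → IsConnected C → IsConnected (U ∩ C)

/-- A subset is negligible if its complement is Z-dense. -/
def IsNegligible {X : Type*} [TopologicalSpace X] (I : Set X) : Prop :=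
  IsZDense Iᶜ

/-- A negligible subset element `(U, I)`: `U` open, `I ⊆ U`, the subspace `U`
locally connected, and `I` negligible in the subspace `U`. -/
def NegligibleElem {Y : Type*} [TopologicalSpace Y] (U I : Set Y) : Prop :=
  IsOpen U ∧ I ⊆ U ∧ LocallyConnectedSpace ↥U ∧
    IsNegligible ((Subtype.val ⁻¹' I : Set ↥U))

/-- A continuous function is diffuse if it pulls back negligible subset elements
to negligible subset elements. -/
def Diffuse {X Y : Type*} [TopologicalSpace X] [TopologicalSpace Y] (f : X → Y) : Prop :=
  Continuous f ∧ ∀ U I : Set Y, NegligibleElem U I → NegligibleElem (f ⁻¹' U) (f ⁻¹' I)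

/-! In ambient terms, `(U, I)` is negligible when `U \ I` is open and removing `I` leaves every
open connected subset of `U` non-empty and connected. Continuity, hence the openness of
`f⁻¹U \ f⁻¹I`, is local. So is the second condition: an open connected `C ⊆ f⁻¹U` is covered
by small open connected sets `K`, each inside a member of the cover, so that the pieces
`K \ f⁻¹I` are connected; pieces of nearby base points overlap, because removing `f⁻¹I` from a
small open connected subset of `K` leaves a point, and the connectedness of `C` chains any two
base points. -/

def NonSeparatingOn {X : Type*} [TopologicalSpace X] (J W : Set X) : Prop :=
  ∀ C ⊆ W, IsOpen C → IsConnected C → IsConnected (C \ J)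

section NonSeparatingOn

variable {X : Type*} [TopologicalSpace X]

theorem NonSeparatingOn.mono {J W W' : Set X} (h : NonSeparatingOn J W) (hW : W' ⊆ W) :
    NonSeparatingOn J W' :=
  fun C hC => h C (hC.trans hW)

theorem Topology.IsInducing.isConnected_image {Y : Type*} [TopologicalSpace Y] {f : X → Y}
    (hf : IsInducing f) {s : Set X} : IsConnected (f '' s) ↔ IsConnected s := by
  rw [IsConnected, hf.isPreconnected_image, image_nonempty, IsConnected]

theorem IsOpen.nonSeparatingOn_preimage_val_iff {V J W : Set X} (hV : IsOpen V) :
    NonSeparatingOn (Subtype.val ⁻¹' J : Set V) (Subtype.val ⁻¹' W) ↔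
      NonSeparatingOn J (V ∩ W) := by
  constructor
  · intro h C hC hCo hCc
    have hVC : V ∩ C = C := inter_eq_right.mpr (hC.trans inter_subset_left)
    have hCc' : IsConnected (Subtype.val ⁻¹' C : Set V) := by
      rwa [← IsInducing.subtypeVal.isConnected_image, Subtype.image_preimage_coe, hVC]
    have := h _ (preimage_mono (hC.trans inter_subset_right))
      (hCo.preimage continuous_subtype_val) hCc'
    rwa [← IsInducing.subtypeVal.isConnected_image, image_sdiff_preimage,
      Subtype.image_preimage_coe, hVC] at this
  · intro h C hC hCo hCc
    rw [← IsInducing.subtypeVal.isConnected_image, image_sdiff_preimage]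
    refine h _ ?_ (hV.isOpenMap_subtype_val _ hCo)
      (IsInducing.subtypeVal.isConnected_image.mpr hCc)
    rintro _ ⟨x, hx, rfl⟩
    exact ⟨x.2, hC hx⟩

theorem IsConnected.sdiff_of_forall_nhds [LocallyConnectedSpace X] {C J : Set X} (hCo : IsOpen C)
    (hC : IsConnected C) (hJ : ∀ x ∈ C, ∃ N ∈ 𝓝 x, NonSeparatingOn J N) :
    IsConnected (C \ J) := by
  have hbasis := locallyConnectedSpace_iff_subsets_isOpen_isConnected.mp ‹_›
  have hK : ∀ x ∈ C, ∃ K, IsOpen K ∧ x ∈ K ∧ IsConnected K ∧ K ⊆ C ∧ NonSeparatingOn J K := by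
    intro x hx
    obtain ⟨N, hN, hJN⟩ := hJ x hx
    obtain ⟨K, hKCN, hKo, hxK, hKc⟩ := hbasis x (C ∩ N) (Filter.inter_mem (hCo.mem_nhds hx) hN)
    exact ⟨K, hKo, hxK, hKc, hKCN.trans inter_subset_left, hJN.mono (hKCN.trans inter_subset_right)⟩
  choose! K hKo hxK hKc hKC hKJ using hK
  have hlink : ∀ x ∈ C, ∀ y ∈ K x, ((K x \ J) ∩ (K y \ J)).Nonempty := by
    intro x hx y hy
    have hyC : y ∈ C := hKC x hx hy
    obtain ⟨L, hL, hLo, -, hLc⟩ := hbasis y (K x ∩ K y)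
      (Filter.inter_mem ((hKo x hx).mem_nhds hy) ((hKo y hyC).mem_nhds (hxK y hyC)))
    obtain ⟨z, hzL, hzJ⟩ := (hKJ x hx L (hL.trans inter_subset_left) hLo hLc).nonempty
    exact ⟨z, ⟨(hL hzL).1, hzJ⟩, (hL hzL).2, hzJ⟩
  have hcover : C \ J = ⋃ x ∈ C, K x \ J := by
    ext z
    simp only [mem_sdiff, mem_iUnion, exists_prop]
    exact ⟨fun ⟨hz, hzJ⟩ => ⟨z, hz, hxK z hz, hzJ⟩, fun ⟨x, hx, hzK, hzJ⟩ => ⟨hKC x hx hzK, hzJ⟩⟩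
  have hchain : ∀ x ∈ C, ∀ y ∈ C,
      Relation.ReflTransGen (fun i j => ((K i \ J) ∩ (K j \ J)).Nonempty ∧ i ∈ C) x y := by
    refine fun x hx y hy => hC.isPreconnected.induction₂' _ (fun x hx => ?_)
      (fun _ _ _ _ _ _ => Relation.ReflTransGen.trans) hx hy
    filter_upwards [nhdsWithin_le_nhds ((hKo x hx).mem_nhds (hxK x hx)), self_mem_nhdsWithin]
      with y hy hyC
    exact ⟨.single ⟨hlink x hx y hy, hx⟩, .single ⟨inter_comm (K x \ J) _ ▸ hlink x hx y hy, hyC⟩⟩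
  rw [hcover]
  exact IsConnected.biUnion_of_reflTransGen hC.nonempty
    (fun x hx => hKJ x hx _ subset_rfl (hKo x hx) (hKc x hx)) hchain

end NonSeparatingOn

section Diffuse

variable {X Y : Type*} [TopologicalSpace X] [TopologicalSpace Y]

theorem IsOpen.negligibleElem_iff {U I : Set Y} (hU : IsOpen U) :
    NegligibleElem U I ↔
      I ⊆ U ∧ LocallyConnectedSpace U ∧ IsOpen (U \ I) ∧ NonSeparatingOn I U := by
  have hopen : IsOpen (Subtype.val ⁻¹' I : Set U)ᶜ ↔ IsOpen (U \ I) := by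
    rw [← preimage_compl, hU.isOpenEmbedding_subtypeVal.isOpen_iff_image_isOpen,
      Subtype.image_preimage_coe, sdiff_eq]
  have hsep : (∀ C : Set U, IsOpen C → IsConnected C → IsConnected ((Subtype.val ⁻¹' I)ᶜ ∩ C)) ↔
      NonSeparatingOn I U := by
    have h := hU.nonSeparatingOn_preimage_val_iff (J := I) (W := U)
    rw [inter_self, Subtype.coe_preimage_self] at h
    rw [← h]
    simp only [NonSeparatingOn, subset_univ, forall_const, sdiff_eq_compl_inter]
  simp only [NegligibleElem, IsNegligible, IsZDense, hU, true_and, hopen, hsep]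

theorem Diffuse.nonSeparatingOn_preimage {f : X → Y} (hf : Diffuse f) {U I : Set Y}
    (hUI : NegligibleElem U I) : NonSeparatingOn (f ⁻¹' I) (f ⁻¹' U) :=
  (((hUI.1.preimage hf.1).negligibleElem_iff).mp (hf.2 U I hUI)).2.2.2

end Diffuse

theorem diffuse_of_cover_general {X Y : Type*} [TopologicalSpace X] [LocallyConnectedSpace X]
    [TopologicalSpace Y] (f : X → Y)
    {𝒱 : Set (Set X)} (hV : ∀ V ∈ 𝒱, IsOpen V) (hcov : ⋃₀ 𝒱 = Set.univ)
    (hloc : ∀ V ∈ 𝒱, Diffuse (fun x : ↥V => f ↑x)) :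
    Diffuse f := by
  have hmem : ∀ x, ∃ V ∈ 𝒱, x ∈ V := fun x => mem_sUnion.mp (hcov ▸ mem_univ x)
  have hfc : Continuous f :=
    continuous_of_cover_nhds (s := fun V : 𝒱 => V.1)
      (fun x => let ⟨V, hV𝒱, hxV⟩ := hmem x; ⟨⟨V, hV𝒱⟩, (hV V hV𝒱).mem_nhds hxV⟩)
      fun V => continuousOn_iff_continuous_domRestrict.mpr (hloc V V.2).1
  refine ⟨hfc, fun U I hUI => ?_⟩
  have hWo : IsOpen (f ⁻¹' U) := hUI.1.preimage hfc
  obtain ⟨hIU, -, hUIo, -⟩ := hUI.1.negligibleElem_iff.mp hUI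
  refine hWo.negligibleElem_iff.mpr ⟨preimage_mono hIU,
    hWo.isOpenEmbedding_subtypeVal.locallyConnectedSpace, hUIo.preimage hfc,
    fun C hCW hCo hCc => hCc.sdiff_of_forall_nhds hCo fun x hx => ?_⟩
  obtain ⟨V, hV𝒱, hxV⟩ := hmem x
  exact ⟨V ∩ f ⁻¹' U, Filter.inter_mem ((hV V hV𝒱).mem_nhds hxV) (hWo.mem_nhds (hCW hx)),
    (hV V hV𝒱).nonSeparatingOn_preimage_val_iff.mp ((hloc V hV𝒱).nonSeparatingOn_preimage hUI)⟩

/-- Diffuseness is a local property: if the restriction of `f` to every member of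
an open cover is diffuse, then `f` is diffuse. -/
theorem diffuse_of_cover {X Y : Type*} [TopologicalSpace X] [LocallyConnectedSpace X]
    [TopologicalSpace Y] [LocallyConnectedSpace Y] (f : X → Y)
    {𝒱 : Set (Set X)} (hV : ∀ V ∈ 𝒱, IsOpen V) (hcov : ⋃₀ 𝒱 = Set.univ)
    (hloc : ∀ V ∈ 𝒱, Diffuse (fun x : ↥V => f ↑x)) :
    Diffuse f :=
  diffuse_of_cover_general f hV hcov hloc
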